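/- If a, b, r > 0 satisfy ab = a·√(r² − a²/4) + b·√(r² − b²/4) (with r² ≥ a²/4 and r² ≥ b²/4), then a² + b² = 4r². -/

import Mathlib

/-! Put `u = √(r² - a²/4)` and `v = √(r² - b²/4)`. Both comparisons `b/2 ⋚ u` and `a/2 ⋚ v`
have the same sign as `4r² - (a² + b²)`, so `a u + b v ⋚ a b` with that same sign as well.
Equality `a u + b v = a b` therefore forces `a² + b² = 4r²`. -/

open Real

lemma half_lt_sqrt_sub_sq_div_four_iff {a b c : ℝ} (hb : 0 ≤ b) :
    b / 2 < √(c - a ^ 2 / 4) ↔ a ^ 2 + b ^ 2 < 4 * c := by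
  rw [lt_sqrt (by positivity)]
  constructor <;> intro h <;> linarith

lemma sqrt_sub_sq_div_four_lt_half_iff {a b c : ℝ} (hb : 0 < b) :
    √(c - a ^ 2 / 4) < b / 2 ↔ 4 * c < a ^ 2 + b ^ 2 := by
  rw [sqrt_lt' (by positivity)]
  constructor <;> intro h <;> linarith

theorem stmt_3_general (a b r : ℝ) (ha : 0 < a) (hb : 0 < b)
    (h : a * b = a * Real.sqrt (r ^ 2 - a ^ 2 / 4) + b * Real.sqrt (r ^ 2 - b ^ 2 / 4)) :
    a ^ 2 + b ^ 2 = 4 * r ^ 2 := by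
  rcases lt_trichotomy (a ^ 2 + b ^ 2) (4 * r ^ 2) with hlt | heq | hgt
  · have hu := (half_lt_sqrt_sub_sq_div_four_iff hb.le).2 hlt
    have hv := (half_lt_sqrt_sub_sq_div_four_iff (a := b) (c := r ^ 2) ha.le).2 (by linarith)
    linarith [mul_lt_mul_of_pos_left hu ha, mul_lt_mul_of_pos_left hv hb]
  · exact heq
  · have hu := (sqrt_sub_sq_div_four_lt_half_iff hb).2 hgt
    have hv := (sqrt_sub_sq_div_four_lt_half_iff (a := b) (c := r ^ 2) ha).2 (by linarith)
    linarith [mul_lt_mul_of_pos_left hu ha, mul_lt_mul_of_pos_left hv hb]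

theorem stmt_3 (a b r : ℝ) (ha : 0 < a) (hb : 0 < b) (hr : 0 < r)
    (ha' : a ^ 2 ≤ 4 * r ^ 2) (hb' : b ^ 2 ≤ 4 * r ^ 2)
    (h : a * b = a * Real.sqrt (r ^ 2 - a ^ 2 / 4) + b * Real.sqrt (r ^ 2 - b ^ 2 / 4)) :
    a ^ 2 + b ^ 2 = 4 * r ^ 2 :=
  stmt_3_general a b r ha hb h
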